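/- For the degenerate Changhee polynomials of the second kind, Ch_{n,λ}(1) + Ch_{n,λ}(0) equals 2 if n = 0 and equals 0 for all n ≥ 1. -/

import Mathlib

open Finset PowerSeries

/-- The degenerate falling factorial `(x)_{n,λ}`. -/
noncomputable def df (l x : ℚ) (n : ℕ) : ℚ := ∏ i ∈ Finset.range n, (x - (i : ℚ) * l)

/-- The formal power series `(1+λt)^{x/λ} := Σ (x)_{n,λ} tⁿ/n!`. -/
noncomputable def B (l x : ℚ) : PowerSeries ℚ :=
  PowerSeries.mk fun n => df l x n / n.factorial

/-- Signed Stirling numbers of the first kind. -/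
def S1 : ℕ → ℕ → ℚ
  | 0, 0 => 1
  | 0, _ + 1 => 0
  | _ + 1, 0 => 0
  | n + 1, k + 1 => S1 n k - (n : ℚ) * S1 n (k + 1)

/-- Stirling numbers of the second kind. -/
def S2 : ℕ → ℕ → ℚ
  | 0, 0 => 1
  | 0, _ + 1 => 0
  | _ + 1, 0 => 0
  | n + 1, k + 1 => ((k : ℚ) + 1) * S2 n (k + 1) + S2 n k

/-- Degenerate Changhee polynomials of the second kind, built from a family `E`
(intended: Carlitz degenerate Euler polynomials): `Ch_{n,λ}(x) = Σ_{l≤n} S₁(n,l) E_{l,λ}(x)`. -/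
noncomputable def Ch (E : ℕ → ℚ → ℚ) (n : ℕ) (x : ℚ) : ℚ :=
  ∑ m ∈ Finset.range (n + 1), S1 n m * E m x

lemma constantCoeff_B (l x : ℚ) : constantCoeff (B l x) = 1 := by
  simp [B, df, ← coeff_zero_eq_constantCoeff_apply]

lemma B_zero (l : ℚ) : B l 0 = 1 := by
  ext (_ | n)
  · simp [B, df]
  · simp [B, df, Finset.prod_range_succ']

lemma B_add_one_ne_zero (l x : ℚ) : B l x + 1 ≠ 0 := by
  intro h
  simpa [constantCoeff_B] using congrArg constantCoeff h

/-- Adding the defining identities at `x = 1` and `x = 0`, and using `B λ 0 = 1`, the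
generating function of `E n 1 + E n 0` times `B λ 1 + 1` is `2 (B λ 1 + 1)`. -/
lemma euler_one_add_euler_zero {l : ℚ} {E : ℕ → ℚ → ℚ}
    (hE : ∀ x : ℚ, (PowerSeries.mk fun n => E n x / n.factorial) * (B l 1 + 1)
      = 2 * B l x) (n : ℕ) :
    E n 1 + E n 0 = if n = 0 then 2 else 0 := by
  have hsum : (PowerSeries.mk fun n => (E n 1 + E n 0) / n.factorial) * (B l 1 + 1)
      = C 2 * (B l 1 + 1) := by
    have h0 := hE 0
    rw [B_zero] at h0
    calc _ = (PowerSeries.mk fun n => E n 1 / n.factorial) * (B l 1 + 1)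
          + (PowerSeries.mk fun n => E n 0 / n.factorial) * (B l 1 + 1) := by
            rw [← add_mul]; congr 1; ext; simp [add_div]
      _ = C 2 * (B l 1 + 1) := by rw [hE 1, h0, map_ofNat]; ring
  have hcoeff := congrArg (coeff n) (mul_right_cancel₀ (B_add_one_ne_zero l 1) hsum)
  rw [coeff_mk, coeff_C] at hcoeff
  split_ifs at hcoeff ⊢ with hn
  · simpa [hn] using hcoeff
  · simpa [Nat.factorial_ne_zero] using hcoeff

lemma S1_zero_right (n : ℕ) : S1 n 0 = if n = 0 then 1 else 0 := by
  cases n <;> rfl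

lemma Ch_add (E : ℕ → ℚ → ℚ) (n : ℕ) (x y : ℚ) :
    Ch E n x + Ch E n y = ∑ m ∈ range (n + 1), S1 n m * (E m x + E m y) := by
  simp only [Ch, ← sum_add_distrib, mul_add]

lemma sum_S1_mul_ite_zero (n : ℕ) (c : ℚ) :
    ∑ m ∈ range (n + 1), S1 n m * (if m = 0 then c else 0) = if n = 0 then c else 0 := by
  simp [mul_ite, S1_zero_right]

/-- `Ch_{n,λ}(1) + Ch_{n,λ}(0) = 2` if `n = 0` and `0` if `n ≥ 1`. -/
theorem stmt4 (l : ℚ) (E : ℕ → ℚ → ℚ)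
    (hE : ∀ x : ℚ, (PowerSeries.mk fun n => E n x / n.factorial) * (B l 1 + 1)
      = 2 * B l x) :
    ∀ n : ℕ, Ch E n 1 + Ch E n 0 = if n = 0 then 2 else 0 := by
  intro n
  simp only [Ch_add, euler_one_add_euler_zero hE, sum_S1_mul_ite_zero]
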